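/- Under the separation condition that within-cluster pairwise distances are all $< \delta/2$ and between-cluster pairwise distances are all $> \delta/2$ (for some $\delta > 0$) on $N$ points partitioned into $\kappa \ge 2$ nonempty ground-truth clusters, the farthest-point clustering procedure — choosing $(c_1, c_2)$ as the pair maximizing pairwise distance, iteratively choosing $c_k$ maximizing the minimum distance to previously chosen centers, and assigning each remaining point to the nearest center — outputs exactly the ground-truth partition: the $\kappa$ chosen centers lie in $\kappa$ distinct ground-truth clusters, and each point is assigned to the center of its own cluster. -/

import Mathlib

/-!
Under the separation hypothesis two points share a cluster exactly when they are closer than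
`δ / 2`. Before the `k`-th center is chosen only `k < κ` clusters contain a center, so some point
lies at distance at least `δ / 2` from every previous center; the max-min choice then puts the
`k`-th center at least that far from all previous ones, i.e. in a new cluster. The first two
centers realise the diameter, which is at least `δ / 2` as there are two clusters. Hence the `κ`
centers meet every cluster exactly once, and a nearest center of a point is closer than `δ / 2`
(as the center of its own cluster is), so it lies in the point's own cluster.
-/

open Function

theorem Fin.exists_forall_lt_apply_ne {β : Type*} [Fintype β] {n : ℕ} (g : Fin n → β)
    {k : Fin n} (hk : (k : ℕ) < Fintype.card β) : ∃ b, ∀ j < k, g j ≠ b := by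
  classical
  have hcard : ((Finset.Iio k).image g).card < (Finset.univ : Finset β).card :=
    calc ((Finset.Iio k).image g).card ≤ (Finset.Iio k).card := Finset.card_image_le
      _ = k := Fin.card_Iio k
      _ < (Finset.univ : Finset β).card := hk
  obtain ⟨b, -, hb⟩ := Finset.exists_mem_notMem_of_card_lt_card hcard
  exact ⟨b, fun j hj hjb => hb (Finset.mem_image.2 ⟨j, Finset.mem_Iio.2 hj, hjb⟩)⟩

theorem le_of_forall_le_of_ciInf_le {ι α : Type*} [Finite ι] [Nonempty ι]
    [ConditionallyCompleteLinearOrder α] {g h : ι → α} {a : α} (hg : ∀ j, a ≤ g j)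
    (hgh : ⨅ j, g j ≤ ⨅ j, h j) (j : ι) : a ≤ h j :=
  (le_ciInf hg).trans (hgh.trans (ciInf_le (Finite.bddBelow_range h) j))

def IsSeparated {α β : Type*} (d : α → α → ℝ) (ℓ : α → β) (t : ℝ) : Prop :=
  ∀ i j, ℓ i = ℓ j ↔ d i j < t

namespace IsSeparated

variable {α β : Type*} {d : α → α → ℝ} {ℓ : α → β} {t : ℝ}

theorem of_lt_of_lt (hwithin : ∀ i j, ℓ i = ℓ j → d i j < t)
    (hbetween : ∀ i j, ℓ i ≠ ℓ j → t < d i j) : IsSeparated d ℓ t :=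
  fun i j => ⟨hwithin i j, fun h => by_contra fun hne => (hbetween i j hne).not_gt h⟩

theorem label_ne_iff (hsep : IsSeparated d ℓ t) {i j : α} : ℓ i ≠ ℓ j ↔ t ≤ d i j :=
  (hsep i j).not.trans not_lt

theorem label_ne_of_forall_le [Nontrivial β] (hsep : IsSeparated d ℓ t) (hℓ : Surjective ℓ)
    {a b : α} (hab : ∀ i j, d i j ≤ d a b) : ℓ a ≠ ℓ b := by
  obtain ⟨m₁, m₂, hm⟩ := exists_pair_ne β
  obtain ⟨⟨i, rfl⟩, ⟨j, rfl⟩⟩ := And.intro (hℓ m₁) (hℓ m₂)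
  exact hsep.label_ne_iff.2 ((hsep.label_ne_iff.1 hm).trans (hab i j))

theorem label_ne_of_maximin {κ : ℕ} {ℓ : α → Fin κ} (hsep : IsSeparated d ℓ t)
    (hℓ : Surjective ℓ) {c : Fin κ → α} {k : Fin κ}
    (hk : ∀ i, (⨅ j : {j // j < k}, d i (c j)) ≤ ⨅ j : {j // j < k}, d (c k) (c j))
    {j : Fin κ} (hj : j < k) : ℓ (c k) ≠ ℓ (c j) := by
  have : Nonempty {j // j < k} := ⟨⟨j, hj⟩⟩
  obtain ⟨m, hm⟩ := Fin.exists_forall_lt_apply_ne (fun j => ℓ (c j)) (k := k)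
    (by simp only [Fintype.card_fin, k.isLt])
  obtain ⟨i, rfl⟩ := hℓ m
  have hfar : ∀ j' : {j // j < k}, t ≤ d i (c j') :=
    fun j' => hsep.label_ne_iff.1 (hm j' j'.2).symm
  exact hsep.label_ne_iff.2 (le_of_forall_le_of_ciInf_le hfar (hk i) ⟨j, hj⟩)

theorem label_eq_of_forall_le {ι : Type*} (hsep : IsSeparated d ℓ t) {c : ι → α}
    (hc : Surjective (ℓ ∘ c)) {i : α} {k₀ : ι} (hk₀ : ∀ k, d i (c k₀) ≤ d i (c k)) :
    ℓ (c k₀) = ℓ i := by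
  obtain ⟨k, hk⟩ := hc (ℓ i)
  exact ((hsep i (c k₀)).2 ((hk₀ k).trans_lt ((hsep i (c k)).1 hk.symm))).symm

end IsSeparated

/-- Correctness of farthest-point clustering under the separation condition: if all
within-cluster distances are `< δ/2` and all between-cluster distances are `> δ/2`,
then the centers `c 0, …, c (κ-1)` chosen by the procedure (first two maximizing the
pairwise distance, each next one maximizing the minimum distance to previous centers)
lie in `κ` distinct ground-truth clusters, and the nearest-center assignment `f`
recovers the ground-truth partition: each point is assigned to the center of its own
cluster. -/
theorem stmt17 (κ N : ℕ) (hκ : 2 ≤ κ)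
    (dhat : Fin N → Fin N → ℝ)
    (ℓ : Fin N → Fin κ) (hsurj : Function.Surjective ℓ)
    (δ : ℝ)
    (hwithin : ∀ i j : Fin N, ℓ i = ℓ j → dhat i j < δ / 2)
    (hbetween : ∀ i j : Fin N, ℓ i ≠ ℓ j → δ / 2 < dhat i j)
    (c : Fin κ → Fin N)
    -- `(c 0, c 1)` maximizes the pairwise distance
    (hc01 : ∀ i j : Fin N, dhat i j ≤ dhat (c ⟨0, by omega⟩) (c ⟨1, by omega⟩))
    -- each further center maximizes the minimum distance to the previous centers
    (hck : ∀ k : Fin κ, 2 ≤ (k : ℕ) → ∀ i : Fin N,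
      (⨅ j : {j : Fin κ // j < k}, dhat i (c j)) ≤
        ⨅ j : {j : Fin κ // j < k}, dhat (c k) (c j))
    -- each point is assigned to its nearest center
    (f : Fin N → Fin κ)
    (hf : ∀ (i : Fin N) (k : Fin κ), dhat i (c (f i)) ≤ dhat i (c k)) :
    Function.Injective (fun k => ℓ (c k)) ∧ ∀ i : Fin N, ℓ (c (f i)) = ℓ i := by
  have hsep := IsSeparated.of_lt_of_lt hwithin hbetween
  have hinj : Injective (fun k => ℓ (c k)) := by
    refine Injective.of_lt_imp_ne fun k₁ k₂ hlt => ?_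
    have hlt' := Fin.lt_def.1 hlt
    by_cases hk₂ : 2 ≤ (k₂ : ℕ)
    · exact (hsep.label_ne_of_maximin hsurj (hck k₂ hk₂) hlt).symm
    · rw [show k₁ = ⟨0, by omega⟩ from Fin.ext (show (k₁ : ℕ) = 0 by omega),
        show k₂ = ⟨1, by omega⟩ from Fin.ext (show (k₂ : ℕ) = 1 by omega)]
      have : Nontrivial (Fin κ) := Fin.nontrivial_iff_two_le.2 hκ
      exact hsep.label_ne_of_forall_le hsurj hc01
  exact ⟨hinj, fun i => hsep.label_eq_of_forall_le (Finite.surjective_of_injective hinj) (hf i)⟩
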